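/- arXiv:2010.11157 — 2 statements merged into one kernel-verified Lean document; each statement's English description precedes it below -/
import Mathlib

section
/- For 0 ≤ k ≤ n, the number of non-crossing (1,2)-configurations on n vertices with e proper edges and l loops is binom(n,2e)·Cat(e)·binom(n−2e,l), and summing this quantity over all pairs (e,l) with e + l = k − 1 gives the Narayana number Nar(n+1,k) = (1/(n+1))·binom(n+1,k)·binom(n+1,k−1). -/
open Finset

/-- Two chords (as sorted pairs of vertices of a convex polygon) cross iff their endpoints
interlace in the cyclic order. -/
def Crosses {n : ℕ} (d e : Fin n × Fin n) : Prop :=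
  (d.1 < e.1 ∧ e.1 < d.2 ∧ d.2 < e.2) ∨ (e.1 < d.1 ∧ d.1 < e.2 ∧ e.2 < d.2)

/-- A non-crossing (1,2)-configuration on `n` vertices placed on a circle:
a set `E` of pairwise non-crossing chords (proper edges, encoded as sorted pairs, pairwise
sharing no endpoints) together with a set `L` of loops at vertices not incident to any chord. -/
def IsNCC (n : ℕ) (E : Finset (Fin n × Fin n)) (L : Finset (Fin n)) : Prop :=
  (∀ d ∈ E, d.1 < d.2) ∧
  (∀ d ∈ E, ∀ e ∈ E, d ≠ e → d.1 ≠ e.1 ∧ d.1 ≠ e.2 ∧ d.2 ≠ e.1 ∧ d.2 ≠ e.2) ∧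
  (∀ d ∈ E, ∀ e ∈ E, ¬Crosses d e) ∧
  (∀ d ∈ E, d.1 ∉ L ∧ d.2 ∉ L)

/-- The binomial coefficient with integer arguments, with `binom(a,b) = 0` for `b < 0`
or `b > a`. -/
def chooseZ (a b : ℤ) : ℕ := if 0 ≤ b ∧ b ≤ a then a.toNat.choose b.toNat else 0


def CrossesN (d e : ℕ × ℕ) : Prop :=
  (d.1 < e.1 ∧ e.1 < d.2 ∧ d.2 < e.2) ∨ (e.1 < d.1 ∧ d.1 < e.2 ∧ e.2 < d.2)

def NCMatch (s : Finset ℕ) (E : Finset (ℕ × ℕ)) : Prop :=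
  (∀ d ∈ E, d.1 ∈ s ∧ d.2 ∈ s ∧ d.1 < d.2) ∧
  (∀ d ∈ E, ∀ e ∈ E, d ≠ e → d.1 ≠ e.1 ∧ d.1 ≠ e.2 ∧ d.2 ≠ e.1 ∧ d.2 ≠ e.2) ∧
  (∀ d ∈ E, ∀ e ∈ E, ¬CrossesN d e) ∧
  (∀ x ∈ s, ∃ d ∈ E, x = d.1 ∨ x = d.2)

open Classical in
noncomputable def NCMs (s : Finset ℕ) : Finset (Finset (ℕ × ℕ)) :=
  (s ×ˢ s).powerset.filter (NCMatch s)

lemma mem_NCMs {s : Finset ℕ} {E : Finset (ℕ × ℕ)} : E ∈ NCMs s ↔ NCMatch s E := by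
  classical
  simp only [NCMs, Finset.mem_filter, Finset.mem_powerset, Finset.filter_congr_decidable,
    and_iff_right_iff_imp]
  intro h d hd
  exact Finset.mem_product.2 ⟨(h.1 d hd).1, (h.1 d hd).2.1⟩

section Struct

variable {s : Finset ℕ} {E : Finset (ℕ × ℕ)} (hs : s.Nonempty)

lemma exists_partner (hE : NCMatch s E) (hs : s.Nonempty) :
    ∃ b, (s.min' hs, b) ∈ E := by
  obtain ⟨d, hd, hor⟩ := hE.2.2.2 (s.min' hs) (s.min'_mem hs)
  rcases hor with h1 | h2
  · exact ⟨d.2, by rw [h1, Prod.mk.eta]; exact hd⟩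
  · exfalso
    have := (hE.1 d hd).2.2
    have := s.min'_le d.1 (hE.1 d hd).1
    omega

lemma partner_unique (hE : NCMatch s E) {a b b' : ℕ} (hb : (a, b) ∈ E) (hb' : (a, b') ∈ E) :
    b = b' := by
  by_contra hne
  have := hE.2.1 _ hb _ hb' (by simp [hne])
  simp at this

/-- classification of edges other than the one at the minimum -/
lemma edge_classify (hE : NCMatch s E) (hs : s.Nonempty) {b : ℕ}
    (hb : (s.min' hs, b) ∈ E) {d : ℕ × ℕ} (hd : d ∈ E) :
    d = (s.min' hs, b) ∨
      ((s.min' hs < d.1 ∧ d.1 < b) ∧ (s.min' hs < d.2 ∧ d.2 < b)) ∨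
      (b < d.1 ∧ b < d.2) := by
  set a := s.min' hs with ha
  by_cases hdab : d = (a, b)
  · exact Or.inl hdab
  have hdist := hE.2.1 d hd _ hb hdab
  have q1 : d.1 ≠ a := hdist.1
  have q2 : d.1 ≠ b := hdist.2.1
  have q3 : d.2 ≠ a := hdist.2.2.1
  have q4 : d.2 ≠ b := hdist.2.2.2
  have h1 : a ≤ d.1 := s.min'_le d.1 (hE.1 d hd).1
  have h2 : d.1 < d.2 := (hE.1 d hd).2.2
  have hab : a < b := (hE.1 _ hb).2.2
  have hnc : ¬ CrossesN (a,b) d := hE.2.2.1 _ hb d hd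
  have hnc1 : ¬(a < d.1 ∧ d.1 < b ∧ b < d.2) := fun h => hnc (Or.inl h)
  refine Or.inr ?_
  omega

end Struct

section Fiber

lemma fiber_fst {s : Finset ℕ} {E : Finset (ℕ × ℕ)} {b : ℕ} (hs : s.Nonempty)
    (hE : E ∈ NCMs s) (hb : (s.min' hs, b) ∈ E) :
    E.filter (fun d => d.2 < b) ∈ NCMs (s.filter (fun x => s.min' hs < x ∧ x < b)) := by
  classical
  set a := s.min' hs with ha
  have h := mem_NCMs.1 hE
  rw [mem_NCMs]
  refine ⟨?_, ?_, ?_, ?_⟩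
  · intro d hd
    rw [Finset.mem_filter] at hd
    obtain ⟨hdE, hd2⟩ := hd
    have hne : d ≠ (a, b) := by
      intro h'; rw [h'] at hd2; exact lt_irrefl _ hd2
    obtain ⟨hm1, hm2, hlt⟩ := h.1 d hdE
    rcases edge_classify h hs hb hdE with h' | h' | h'
    · exact absurd h' hne
    · exact ⟨Finset.mem_filter.2 ⟨hm1, h'.1⟩, Finset.mem_filter.2 ⟨hm2, h'.2⟩, hlt⟩
    · exact absurd h'.2 (by omega)
  · intro d hd e he hne
    exact h.2.1 d (Finset.mem_of_mem_filter d hd) e (Finset.mem_of_mem_filter e he) hne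
  · intro d hd e he
    exact h.2.2.1 d (Finset.mem_of_mem_filter d hd) e (Finset.mem_of_mem_filter e he)
  · intro x hx
    rw [Finset.mem_filter] at hx
    obtain ⟨hxs, hxa, hxb⟩ := hx
    obtain ⟨d, hd, hor⟩ := h.2.2.2 x hxs
    refine ⟨d, Finset.mem_filter.2 ⟨hd, ?_⟩, hor⟩
    have hne : d ≠ (a, b) := by
      rintro rfl
      rcases hor with h' | h' <;> simp at h' <;> omega
    rcases edge_classify h hs hb hd with h' | h' | h'
    · exact absurd h' hne
    · exact h'.2.2
    · exfalso; rcases hor with h'' | h'' <;> omega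

lemma fiber_snd {s : Finset ℕ} {E : Finset (ℕ × ℕ)} {b : ℕ} (hs : s.Nonempty)
    (hE : E ∈ NCMs s) (hb : (s.min' hs, b) ∈ E) :
    E.filter (fun d => b < d.1) ∈ NCMs (s.filter (fun x => b < x)) := by
  classical
  set a := s.min' hs with ha
  have h := mem_NCMs.1 hE
  have hab : a < b := (h.1 _ hb).2.2
  rw [mem_NCMs]
  refine ⟨?_, ?_, ?_, ?_⟩
  · intro d hd
    rw [Finset.mem_filter] at hd
    obtain ⟨hdE, hd1⟩ := hd
    have hne : d ≠ (a, b) := by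
      intro h'; rw [h'] at hd1; simp at hd1; omega
    obtain ⟨hm1, hm2, hlt⟩ := h.1 d hdE
    rcases edge_classify h hs hb hdE with h' | h' | h'
    · exact absurd h' hne
    · exact absurd h'.1.2 (by omega)
    · exact ⟨Finset.mem_filter.2 ⟨hm1, h'.1⟩, Finset.mem_filter.2 ⟨hm2, h'.2⟩, hlt⟩
  · intro d hd e he hne
    exact h.2.1 d (Finset.mem_of_mem_filter d hd) e (Finset.mem_of_mem_filter e he) hne
  · intro d hd e he
    exact h.2.2.1 d (Finset.mem_of_mem_filter d hd) e (Finset.mem_of_mem_filter e he)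
  · intro x hx
    rw [Finset.mem_filter] at hx
    obtain ⟨hxs, hxb⟩ := hx
    obtain ⟨d, hd, hor⟩ := h.2.2.2 x hxs
    refine ⟨d, Finset.mem_filter.2 ⟨hd, ?_⟩, hor⟩
    have hne : d ≠ (a, b) := by
      rintro rfl
      rcases hor with h' | h' <;> simp at h' <;> omega
    rcases edge_classify h hs hb hd with h' | h' | h'
    · exact absurd h' hne
    · exfalso; rcases hor with h'' | h'' <;> omega
    · exact h'.1

end Fiber

section Glue

variable {s : Finset ℕ} {b : ℕ} {F₁ F₂ : Finset (ℕ × ℕ)}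

lemma glue_mem (hs : s.Nonempty) (hbs : b ∈ s.erase (s.min' hs))
    (h1 : F₁ ∈ NCMs (s.filter (fun x => s.min' hs < x ∧ x < b)))
    (h2 : F₂ ∈ NCMs (s.filter (fun x => b < x))) :
    insert (s.min' hs, b) (F₁ ∪ F₂) ∈ NCMs s := by
  classical
  set a := s.min' hs with ha
  have hbmem : b ∈ s := Finset.mem_of_mem_erase hbs
  have hab : a < b := lt_of_le_of_ne (s.min'_le b hbmem) (Ne.symm (Finset.ne_of_mem_erase hbs))
  have has : a ∈ s := s.min'_mem hs
  have H1 := mem_NCMs.1 h1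
  have H2 := mem_NCMs.1 h2
  have B1 : ∀ d ∈ F₁, d.1 ∈ s ∧ d.2 ∈ s ∧ a < d.1 ∧ d.1 < b ∧ a < d.2 ∧ d.2 < b ∧ d.1 < d.2 := by
    intro d hd
    obtain ⟨hm1, hm2, hlt⟩ := H1.1 d hd
    rw [Finset.mem_filter] at hm1 hm2
    exact ⟨hm1.1, hm2.1, hm1.2.1, hm1.2.2, hm2.2.1, hm2.2.2, hlt⟩
  have B2 : ∀ d ∈ F₂, d.1 ∈ s ∧ d.2 ∈ s ∧ b < d.1 ∧ b < d.2 ∧ d.1 < d.2 := by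
    intro d hd
    obtain ⟨hm1, hm2, hlt⟩ := H2.1 d hd
    rw [Finset.mem_filter] at hm1 hm2
    exact ⟨hm1.1, hm2.1, hm1.2, hm2.2, hlt⟩
  rw [mem_NCMs]
  refine ⟨?_, ?_, ?_, ?_⟩
  · intro d hd
    rcases Finset.mem_insert.1 hd with rfl | hd
    · exact ⟨has, hbmem, hab⟩
    rcases Finset.mem_union.1 hd with hd | hd
    · obtain ⟨q1, q2, _⟩ := B1 d hd; exact ⟨q1, q2, (B1 d hd).2.2.2.2.2.2⟩
    · obtain ⟨q1, q2, _⟩ := B2 d hd; exact ⟨q1, q2, (B2 d hd).2.2.2.2⟩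
  · intro d hd e he hne
    rcases Finset.mem_insert.1 hd with rfl | hd <;> rcases Finset.mem_insert.1 he with h' | he
    · exact absurd h'.symm hne
    · rcases Finset.mem_union.1 he with he | he
      · obtain ⟨_, _, q⟩ := B1 e he; simp only []; omega
      · obtain ⟨_, _, q⟩ := B2 e he; simp only []; omega
    · subst h'
      rcases Finset.mem_union.1 hd with hd | hd
      · obtain ⟨_, _, q⟩ := B1 d hd; simp only []; omega
      · obtain ⟨_, _, q⟩ := B2 d hd; simp only []; omega
    · rcases Finset.mem_union.1 hd with hd | hd <;> rcases Finset.mem_union.1 he with he | he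
      · exact H1.2.1 d hd e he hne
      · obtain ⟨_, _, q⟩ := B1 d hd; obtain ⟨_, _, q'⟩ := B2 e he; omega
      · obtain ⟨_, _, q⟩ := B2 d hd; obtain ⟨_, _, q'⟩ := B1 e he; omega
      · exact H2.2.1 d hd e he hne
  · intro d hd e he
    rcases Finset.mem_insert.1 hd with rfl | hd <;> rcases Finset.mem_insert.1 he with h' | he
    · subst h'; simp only [CrossesN]; omega
    · rcases Finset.mem_union.1 he with he | he
      · obtain ⟨_, _, q⟩ := B1 e he; simp only [CrossesN]; omega
      · obtain ⟨_, _, q⟩ := B2 e he; simp only [CrossesN]; omega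
    · subst h'
      rcases Finset.mem_union.1 hd with hd | hd
      · obtain ⟨_, _, q⟩ := B1 d hd; simp only [CrossesN]; omega
      · obtain ⟨_, _, q⟩ := B2 d hd; simp only [CrossesN]; omega
    · rcases Finset.mem_union.1 hd with hd | hd <;> rcases Finset.mem_union.1 he with he | he
      · exact H1.2.2.1 d hd e he
      · obtain ⟨_, _, q⟩ := B1 d hd; obtain ⟨_, _, q'⟩ := B2 e he
        simp only [CrossesN]; omega
      · obtain ⟨_, _, q⟩ := B2 d hd; obtain ⟨_, _, q'⟩ := B1 e he
        simp only [CrossesN]; omega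
      · exact H2.2.2.1 d hd e he
  · intro x hx
    by_cases hxa : x = a
    · exact ⟨(a, b), Finset.mem_insert_self _ _, Or.inl hxa⟩
    by_cases hxb : x = b
    · exact ⟨(a, b), Finset.mem_insert_self _ _, Or.inr hxb⟩
    have hax : a < x := lt_of_le_of_ne (s.min'_le x hx) (Ne.symm hxa)
    rcases lt_or_gt_of_ne hxb with hlt | hgt
    · obtain ⟨d, hd, hor⟩ := H1.2.2.2 x (Finset.mem_filter.2 ⟨hx, hax, hlt⟩)
      exact ⟨d, Finset.mem_insert.2 (Or.inr (Finset.mem_union_left _ hd)), hor⟩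
    · obtain ⟨d, hd, hor⟩ := H2.2.2.2 x (Finset.mem_filter.2 ⟨hx, hgt⟩)
      exact ⟨d, Finset.mem_insert.2 (Or.inr (Finset.mem_union_right _ hd)), hor⟩

end Glue

section FiberCard

lemma glue_split {s : Finset ℕ} {E : Finset (ℕ × ℕ)} {b : ℕ} (hs : s.Nonempty)
    (hE : E ∈ NCMs s) (hb : (s.min' hs, b) ∈ E) :
    insert (s.min' hs, b) (E.filter (fun d => d.2 < b) ∪ E.filter (fun d => b < d.1)) = E := by
  classical
  set a := s.min' hs with ha
  have h := mem_NCMs.1 hE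
  have hab : a < b := (h.1 _ hb).2.2
  apply Finset.Subset.antisymm
  · intro d hd
    rcases Finset.mem_insert.1 hd with rfl | hd
    · exact hb
    rcases Finset.mem_union.1 hd with hd | hd <;> exact Finset.mem_of_mem_filter d hd
  · intro d hd
    rcases edge_classify h hs hb hd with h' | h' | h'
    · exact Finset.mem_insert.2 (Or.inl h')
    · exact Finset.mem_insert.2 (Or.inr (Finset.mem_union_left _
        (Finset.mem_filter.2 ⟨hd, h'.2.2⟩)))
    · exact Finset.mem_insert.2 (Or.inr (Finset.mem_union_right _
        (Finset.mem_filter.2 ⟨hd, h'.1⟩)))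

lemma split_glue {s : Finset ℕ} {b : ℕ} {F₁ F₂ : Finset (ℕ × ℕ)} (hs : s.Nonempty)
    (hbs : b ∈ s.erase (s.min' hs))
    (h1 : F₁ ∈ NCMs (s.filter (fun x => s.min' hs < x ∧ x < b)))
    (h2 : F₂ ∈ NCMs (s.filter (fun x => b < x))) :
    (insert (s.min' hs, b) (F₁ ∪ F₂)).filter (fun d => d.2 < b) = F₁ ∧
    (insert (s.min' hs, b) (F₁ ∪ F₂)).filter (fun d => b < d.1) = F₂ := by
  classical
  set a := s.min' hs with ha
  have H1 := mem_NCMs.1 h1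
  have H2 := mem_NCMs.1 h2
  have hab : a < b := lt_of_le_of_ne (s.min'_le b (Finset.mem_of_mem_erase hbs))
    (Ne.symm (Finset.ne_of_mem_erase hbs))
  have B1 : ∀ d ∈ F₁, d.1 < b ∧ d.2 < b := by
    intro d hd
    obtain ⟨hm1, hm2, _⟩ := H1.1 d hd
    rw [Finset.mem_filter] at hm1 hm2
    exact ⟨hm1.2.2, hm2.2.2⟩
  have B2 : ∀ d ∈ F₂, b < d.1 ∧ b < d.2 := by
    intro d hd
    obtain ⟨hm1, hm2, _⟩ := H2.1 d hd
    rw [Finset.mem_filter] at hm1 hm2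
    exact ⟨hm1.2, hm2.2⟩
  constructor <;> ext d <;> rw [Finset.mem_filter, Finset.mem_insert, Finset.mem_union] <;>
    constructor
  · rintro ⟨rfl | hd | hd, hlt⟩
    · simp at hlt
    · exact hd
    · exact absurd (B2 d hd).2 (by omega)
  · intro hd
    exact ⟨Or.inr (Or.inl hd), (B1 d hd).2⟩
  · rintro ⟨rfl | hd | hd, hlt⟩
    · exact absurd hlt (by simp; omega)
    · exact absurd (B1 d hd).1 (by omega)
    · exact hd
  · intro hd
    exact ⟨Or.inr (Or.inr hd), (B2 d hd).1⟩

lemma card_fiber (s : Finset ℕ) (hs : s.Nonempty) (b : ℕ) (hbs : b ∈ s.erase (s.min' hs)) :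
    ((NCMs s).filter (fun E => (s.min' hs, b) ∈ E)).card
      = (NCMs (s.filter (fun x => s.min' hs < x ∧ x < b))).card *
        (NCMs (s.filter (fun x => b < x))).card := by
  classical
  rw [← Finset.card_product]
  apply Finset.card_nbij'
    (i := fun E => (E.filter (fun d => d.2 < b), E.filter (fun d => b < d.1)))
    (j := fun F => insert (s.min' hs, b) (F.1 ∪ F.2))
  · intro E hE
    rw [Finset.mem_coe, Finset.mem_filter] at hE
    exact Finset.mem_product.2 ⟨fiber_fst hs hE.1 hE.2, fiber_snd hs hE.1 hE.2⟩
  · intro F hF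
    rw [Finset.mem_coe, Finset.mem_product] at hF
    exact Finset.mem_filter.2 ⟨glue_mem hs hbs hF.1 hF.2, Finset.mem_insert_self _ _⟩
  · intro E hE
    rw [Finset.mem_coe, Finset.mem_filter] at hE
    exact glue_split hs hE.1 hE.2
  · intro F hF
    rw [Finset.mem_coe, Finset.mem_product] at hF
    obtain ⟨e1, e2⟩ := split_glue hs hbs hF.1 hF.2
    exact Prod.ext e1 e2

end FiberCard

lemma NCMs_card_step (s : Finset ℕ) (hs : s.Nonempty) :
    (NCMs s).card = ∑ b ∈ s.erase (s.min' hs),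
      (NCMs (s.filter (fun x => s.min' hs < x ∧ x < b))).card *
        (NCMs (s.filter (fun x => b < x))).card := by
  classical
  set a := s.min' hs with ha
  have hdec : NCMs s = (s.erase a).biUnion
      (fun b => (NCMs s).filter (fun E => (a, b) ∈ E)) := by
    apply Finset.Subset.antisymm
    · intro E hE
      obtain ⟨b, hb⟩ := exists_partner (mem_NCMs.1 hE) hs
      have hbs : b ∈ s := ((mem_NCMs.1 hE).1 _ hb).2.1
      have hab : a < b := ((mem_NCMs.1 hE).1 _ hb).2.2
      exact Finset.mem_biUnion.2 ⟨b, Finset.mem_erase.2 ⟨by omega, hbs⟩,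
        Finset.mem_filter.2 ⟨hE, hb⟩⟩
    · intro E hE
      obtain ⟨b, _, hb⟩ := Finset.mem_biUnion.1 hE
      exact (Finset.mem_filter.1 hb).1
  rw [hdec, Finset.card_biUnion]
  · exact Finset.sum_congr rfl fun b hb => card_fiber s hs b hb
  · intro b hb b' hb' hne
    simp only [Function.onFun]
    rw [Finset.disjoint_left]
    intro E hE hE'
    rw [Finset.mem_filter] at hE hE'
    exact hne (partner_unique (mem_NCMs.1 hE.1) hE.2 hE'.2)

lemma sum_filter_lt_card (g : ℕ → ℕ) :
    ∀ (N : ℕ) (t : Finset ℕ), t.card = N →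
      ∑ b ∈ t, g ((t.filter (fun x => x < b)).card) = ∑ j ∈ Finset.range N, g j := by
  intro N
  induction N with
  | zero => intro t ht; rw [Finset.card_eq_zero] at ht; subst ht; simp
  | succ N ihN =>
    intro t ht
    have htne : t.Nonempty := Finset.card_pos.1 (by omega)
    set M := t.max' htne with hM
    have h1 : t.filter (fun x => x < M) = t.erase M := by
      ext x
      rw [Finset.mem_filter, Finset.mem_erase]
      constructor
      · rintro ⟨hx, hlt⟩; exact ⟨by omega, hx⟩
      · rintro ⟨hne, hx⟩
        exact ⟨hx, lt_of_le_of_ne (t.le_max' x hx) hne⟩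
    have h2 : ∀ b ∈ t.erase M, t.filter (fun x => x < b) = (t.erase M).filter (fun x => x < b) := by
      intro b hb
      have hbM : b < M := lt_of_le_of_ne (t.le_max' b (Finset.mem_of_mem_erase hb))
        (Finset.ne_of_mem_erase hb)
      ext x
      simp only [Finset.mem_filter, Finset.mem_erase]
      constructor
      · rintro ⟨hx, hlt⟩; exact ⟨⟨by omega, hx⟩, hlt⟩
      · rintro ⟨⟨_, hx⟩, hlt⟩; exact ⟨hx, hlt⟩
    have hcard : (t.erase M).card = N := by
      rw [Finset.card_erase_of_mem (t.max'_mem htne), ht]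
      omega
    rw [← Finset.sum_erase_add t _ (t.max'_mem htne), h1, hcard,
      Finset.sum_congr rfl (fun b hb => by rw [h2 b hb]),
      ihN (t.erase M) hcard, Finset.sum_range_succ]

lemma sum_even_split (h : ℕ → ℕ) :
    ∀ M : ℕ, ∑ j ∈ Finset.range (2*M+1), (if 2 ∣ j then h (j/2) else 0)
      = ∑ q ∈ Finset.range (M+1), h q := by
  intro M
  induction M with
  | zero => simp
  | succ M ihM =>
    have e1 : 2*(M+1)+1 = (2*M+1) + 1 + 1 := by omega
    rw [e1, Finset.sum_range_succ, Finset.sum_range_succ, ihM,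
      if_neg (by omega), if_pos (by omega), Finset.sum_range_succ]
    have e2 : (2*M+1+1)/2 = M + 1 := by omega
    rw [e2, add_zero]
    simp [Finset.sum_range_succ]

theorem card_NCMs : ∀ (N : ℕ) (s : Finset ℕ), s.card = N →
    (NCMs s).card = if 2 ∣ N then catalan (N / 2) else 0 := by
  intro N
  induction N using Nat.strong_induction_on with
  | _ N ih =>
  intro s hcard
  rcases s.eq_empty_or_nonempty with rfl | hs
  · have hN : N = 0 := by simpa using hcard.symm
    subst hN
    have : NCMs ∅ = {∅} := by
      ext E
      rw [mem_NCMs, Finset.mem_singleton]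
      constructor
      · intro h
        ext d
        simp only [Finset.notMem_empty, iff_false]
        intro hd
        exact absurd (h.1 d hd).1 (Finset.notMem_empty _)
      · rintro rfl
        exact ⟨fun d hd => absurd hd (Finset.notMem_empty _),
          fun d hd => absurd hd (Finset.notMem_empty _),
          fun d hd => absurd hd (Finset.notMem_empty _),
          fun x hx => absurd hx (Finset.notMem_empty _)⟩
    simp [this]
  · set a := s.min' hs with ha
    set t := s.erase a with hts
    have htcard : t.card = N - 1 := by
      rw [hts, Finset.card_erase_of_mem (s.min'_mem hs), hcard]
    have hN1 : 1 ≤ N := by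
      rw [← hcard]; exact Finset.card_pos.2 hs
    have hfact1 : ∀ b : ℕ, s.filter (fun x => a < x ∧ x < b) = t.filter (fun x => x < b) := by
      intro b
      ext x
      simp only [Finset.mem_filter, hts, Finset.mem_erase]
      constructor
      · rintro ⟨hx, h1, h2⟩; exact ⟨⟨by omega, hx⟩, h2⟩
      · rintro ⟨⟨hne, hx⟩, h2⟩
        exact ⟨hx, lt_of_le_of_ne (s.min'_le x hx) (Ne.symm hne), h2⟩
    have hfact2 : ∀ b ∈ t, (s.filter (fun x => b < x)).card
        = N - 2 - (t.filter (fun x => x < b)).card := by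
      intro b hb
      have hbs : b ∈ s := Finset.mem_of_mem_erase hb
      have hab : a < b := lt_of_le_of_ne (s.min'_le b hbs) (Ne.symm (Finset.ne_of_mem_erase hb))
      have hg : s.filter (fun x => b < x) = t.filter (fun x => b < x) := by
        ext x
        simp only [Finset.mem_filter, hts, Finset.mem_erase]
        constructor
        · rintro ⟨hx, h1⟩; exact ⟨⟨by omega, hx⟩, h1⟩
        · rintro ⟨⟨_, hx⟩, h1⟩; exact ⟨hx, h1⟩
      have hneg : t.filter (fun x => ¬ x < b) = insert b (t.filter (fun x => b < x)) := by
        ext x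
        simp only [Finset.mem_filter, Finset.mem_insert, hts, Finset.mem_erase]
        constructor
        · rintro ⟨⟨hne, hx⟩, h1⟩
          rcases Nat.lt_or_ge b x with h' | h'
          · exact Or.inr ⟨⟨hne, hx⟩, h'⟩
          · exact Or.inl (by omega)
        · rintro (rfl | ⟨⟨hne, hx⟩, h1⟩)
          · exact ⟨⟨by omega, hbs⟩, by omega⟩
          · exact ⟨⟨hne, hx⟩, by omega⟩
      have hsplit := Finset.card_filter_add_card_filter_not
        (s := t) (p := fun x => x < b)
      rw [hneg, Finset.card_insert_of_notMem (by simp)] at hsplit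
      rw [hg]
      omega
    rw [NCMs_card_step s hs]
    set g : ℕ → ℕ := fun j => (if 2 ∣ j then catalan (j/2) else 0) *
      (if 2 ∣ (N-2-j) then catalan ((N-2-j)/2) else 0) with hg
    have key : ∀ b ∈ t, (NCMs (s.filter (fun x => a < x ∧ x < b))).card *
        (NCMs (s.filter (fun x => b < x))).card = g ((t.filter (fun x => x < b)).card) := by
      intro b hb
      have hlt1 : (t.filter (fun x => x < b)).card < N := by
        have := Finset.card_filter_le t (fun x => x < b)
        omega
      have hc2 := hfact2 b hb
      have hlt2 : (s.filter (fun x => b < x)).card < N := by omega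
      rw [hfact1 b, ih _ hlt1 _ rfl, ih _ hlt2 _ rfl, hc2, hg]
    rw [Finset.sum_congr rfl key, sum_filter_lt_card g (N-1) t htcard]
    by_cases hpar : 2 ∣ N
    · obtain ⟨e, rfl⟩ : ∃ e, N = 2*e+2 := ⟨(N-2)/2, by omega⟩
      have hr : 2*e+2-1 = 2*e+1 := by omega
      rw [hr]
      have hgj : ∀ j ∈ Finset.range (2*e+1), g j =
          if 2 ∣ j then catalan (j/2) * catalan (e - j/2) else 0 := by
        intro j hj
        rw [Finset.mem_range] at hj
        by_cases h2 : 2 ∣ j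
        · rw [hg]
          simp only []
          rw [if_pos h2, if_pos h2, if_pos (by omega : 2 ∣ (2*e+2-2-j)),
            (by omega : 2*e+2-2-j = 2*e - j), (by omega : (2*e-j)/2 = e - j/2)]
        · rw [hg]; simp only []; rw [if_neg h2, if_neg h2, zero_mul]
      rw [Finset.sum_congr rfl hgj, sum_even_split (fun q => catalan q * catalan (e - q)) e,
        if_pos (by omega : (2:ℕ) ∣ (2*e+2)), (by omega : (2*e+2)/2 = e+1), catalan_succ,
        Finset.sum_range]
    · rw [if_neg hpar]
      apply Finset.sum_eq_zero
      intro j hj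
      rw [Finset.mem_range] at hj
      rw [hg]
      by_cases h2 : 2 ∣ j
      · simp only []; rw [if_neg (by omega : ¬ 2 ∣ (N-2-j)), mul_zero]
      · simp only []; rw [if_neg h2, zero_mul]

section FinLayer

variable {n : ℕ}

def esupp (E : Finset (Fin n × Fin n)) : Finset (Fin n) := E.biUnion (fun d => {d.1, d.2})

lemma mem_esupp {E : Finset (Fin n × Fin n)} {x : Fin n} :
    x ∈ esupp E ↔ ∃ d ∈ E, x = d.1 ∨ x = d.2 := by
  simp [esupp, Finset.mem_biUnion]

lemma card_esupp {E : Finset (Fin n × Fin n)}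
    (h1 : ∀ d ∈ E, d.1 < d.2)
    (h2 : ∀ d ∈ E, ∀ e ∈ E, d ≠ e → d.1 ≠ e.1 ∧ d.1 ≠ e.2 ∧ d.2 ≠ e.1 ∧ d.2 ≠ e.2) :
    (esupp E).card = 2 * E.card := by
  rw [esupp, Finset.card_biUnion]
  · rw [Finset.sum_congr rfl (fun d hd => (by
      rw [Finset.card_insert_of_notMem (by simp [ne_of_lt (h1 d hd)]),
        Finset.card_singleton] : ({d.1, d.2} : Finset (Fin n)).card = 2)),
      Finset.sum_const, smul_eq_mul, mul_comm]
  · intro d hd e he hne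
    simp only [Function.onFun]
    rw [Finset.disjoint_left]
    intro x hx hx'
    simp only [Finset.mem_insert, Finset.mem_singleton] at hx hx'
    obtain ⟨q1, q2, q3, q4⟩ := h2 d hd e he hne
    rcases hx with rfl | rfl <;> tauto

def cond123 (n : ℕ) (E : Finset (Fin n × Fin n)) : Prop :=
  (∀ d ∈ E, d.1 < d.2) ∧
  (∀ d ∈ E, ∀ e ∈ E, d ≠ e → d.1 ≠ e.1 ∧ d.1 ≠ e.2 ∧ d.2 ≠ e.1 ∧ d.2 ≠ e.2) ∧
  (∀ d ∈ E, ∀ e ∈ E, ¬Crosses d e)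

open Classical in
noncomputable def ncpm (n e : ℕ) : Finset (Finset (Fin n × Fin n)) :=
  Finset.univ.filter (fun E => cond123 n E ∧ E.card = e)

lemma card_ncpm_fiber {e : ℕ} (S : Finset (Fin n)) (hS : S.card = 2*e) :
    ((ncpm n e).filter (fun E => esupp E = S)).card = catalan e := by
  classical
  set s : Finset ℕ := S.image Fin.val with hsdef
  have hscard : s.card = 2*e := by
    rw [hsdef, Finset.card_image_of_injective _ Fin.val_injective, hS]
  have hcat : (NCMs s).card = catalan e := by
    rw [card_NCMs (2*e) s hscard, if_pos ⟨e, rfl⟩, Nat.mul_div_cancel_left e (by norm_num)]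
  rw [← hcat]
  set pm : Fin n × Fin n → ℕ × ℕ := fun d => (d.1.val, d.2.val) with hpm
  have pm_inj : Function.Injective pm := by
    intro p q h
    rw [hpm] at h
    simp only [Prod.mk.injEq] at h
    exact Prod.ext (Fin.val_injective h.1) (Fin.val_injective h.2)
  apply Finset.card_nbij (i := fun E => E.image pm)
  · -- maps into NCMs s
    intro E hE
    rw [Finset.mem_coe, Finset.mem_filter] at hE
    obtain ⟨hE1, hsupp⟩ := hE
    rw [ncpm, Finset.mem_filter] at hE1
    obtain ⟨-, ⟨c1, c2, c3⟩, -⟩ := hE1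
    rw [Finset.mem_coe, mem_NCMs]
    refine ⟨?_, ?_, ?_, ?_⟩
    · rintro d' hd'
      rw [Finset.mem_image] at hd'
      obtain ⟨d, hd, rfl⟩ := hd'
      have m1 : d.1 ∈ S := by rw [← hsupp, mem_esupp]; exact ⟨d, hd, Or.inl rfl⟩
      have m2 : d.2 ∈ S := by rw [← hsupp, mem_esupp]; exact ⟨d, hd, Or.inr rfl⟩
      exact ⟨Finset.mem_image_of_mem _ m1, Finset.mem_image_of_mem _ m2, c1 d hd⟩
    · rintro d' hd' e' he' hne
      rw [Finset.mem_image] at hd' he'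
      obtain ⟨d, hd, rfl⟩ := hd'
      obtain ⟨ed, he, rfl⟩ := he'
      have hde : d ≠ ed := by rintro rfl; exact hne rfl
      obtain ⟨q1, q2, q3, q4⟩ := c2 d hd ed he hde
      exact ⟨fun h => q1 (Fin.val_injective h), fun h => q2 (Fin.val_injective h),
        fun h => q3 (Fin.val_injective h), fun h => q4 (Fin.val_injective h)⟩
    · rintro d' hd' e' he' hcr
      rw [Finset.mem_image] at hd' he'
      obtain ⟨d, hd, rfl⟩ := hd'
      obtain ⟨ed, he, rfl⟩ := he'
      exact c3 d hd ed he hcr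
    · intro x hx
      rw [hsdef, Finset.mem_image] at hx
      obtain ⟨u, hu, rfl⟩ := hx
      rw [← hsupp, mem_esupp] at hu
      obtain ⟨d, hd, hor⟩ := hu
      refine ⟨pm d, Finset.mem_image_of_mem _ hd, ?_⟩
      rcases hor with rfl | rfl
      · exact Or.inl rfl
      · exact Or.inr rfl
  · -- injective
    intro E1 h1 E2 h2 h
    exact Finset.image_injective pm_inj h
  · -- surjective
    intro F hF
    have HF := mem_NCMs.1 (Finset.mem_coe.1 hF)
    set E : Finset (Fin n × Fin n) := Finset.univ.filter (fun d => pm d ∈ F ∧ d.1 < d.2) with hEdef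
    have hmemE : ∀ d : Fin n × Fin n, d ∈ E ↔ pm d ∈ F ∧ d.1 < d.2 := by
      intro d; rw [hEdef]; simp
    have himg : E.image pm = F := by
      apply Finset.Subset.antisymm
      · intro p hp
        rw [Finset.mem_image] at hp
        obtain ⟨d, hd, rfl⟩ := hp
        exact ((hmemE d).1 hd).1
      · intro p hp
        have hp1 : p.1 ∈ s := (HF.1 p hp).1
        have hp2 : p.2 ∈ s := (HF.1 p hp).2.1
        rw [hsdef, Finset.mem_image] at hp1 hp2
        obtain ⟨u, hu, hu'⟩ := hp1
        obtain ⟨v, hv, hv'⟩ := hp2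
        have hpuv : p = pm (u, v) := by
          rw [hpm]; exact Prod.ext hu'.symm hv'.symm
        rw [Finset.mem_image]
        refine ⟨(u, v), (hmemE (u,v)).2 ⟨by rw [← hpuv]; exact hp, ?_⟩, hpuv.symm⟩
        have : (u : ℕ) < (v : ℕ) := by
          rw [hu', hv']; exact (HF.1 p hp).2.2
        exact this
      -- end himg
    have hsupp : esupp E = S := by
      apply Finset.Subset.antisymm
      · intro x hx
        rw [mem_esupp] at hx
        obtain ⟨d, hd, hor⟩ := hx
        have := ((hmemE d).1 hd).1
        have h1 : (pm d).1 ∈ s := (HF.1 _ this).1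
        have h2 : (pm d).2 ∈ s := (HF.1 _ this).2.1
        rw [hsdef, Finset.mem_image] at h1 h2
        rcases hor with rfl | rfl
        · obtain ⟨u, hu, hu'⟩ := h1
          rwa [← Fin.val_injective hu']
        · obtain ⟨u, hu, hu'⟩ := h2
          rwa [← Fin.val_injective hu']
      · intro u hu
        have : (u : ℕ) ∈ s := by rw [hsdef]; exact Finset.mem_image_of_mem _ hu
        obtain ⟨p, hp, hor⟩ := HF.2.2.2 _ this
        obtain ⟨d, hd, hd'⟩ := Finset.mem_image.1 (himg.symm ▸ hp : p ∈ E.image pm)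
        rw [mem_esupp]
        refine ⟨d, hd, ?_⟩
        rcases hor with h' | h'
        · left
          apply Fin.val_injective
          exact h'.trans (by rw [← hd', hpm])
        · right
          apply Fin.val_injective
          exact h'.trans (by rw [← hd', hpm])
    have hc123 : cond123 n E := by
      refine ⟨fun d hd => ((hmemE d).1 hd).2, ?_, ?_⟩
      · intro d hd ed hed hne
        have hd' : pm d ∈ F := ((hmemE d).1 hd).1
        have hed' : pm ed ∈ F := ((hmemE ed).1 hed).1
        have hne' : pm d ≠ pm ed := fun h => hne (pm_inj h)
        obtain ⟨q1, q2, q3, q4⟩ := HF.2.1 _ hd' _ hed' hne'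
        refine ⟨fun h => q1 ?_, fun h => q2 ?_, fun h => q3 ?_, fun h => q4 ?_⟩ <;>
          rw [hpm] <;> simp only [] <;> rw [h]
      · intro d hd ed hed hcr
        exact HF.2.2.1 _ ((hmemE d).1 hd).1 _ ((hmemE ed).1 hed).1 hcr
    have hcardE : E.card = e := by
      have := card_esupp hc123.1 hc123.2.1
      rw [hsupp, hS] at this
      omega
    refine ⟨E, ?_, himg⟩
    rw [Finset.mem_coe, Finset.mem_filter]
    refine ⟨?_, hsupp⟩
    rw [ncpm, Finset.mem_filter]
    exact ⟨Finset.mem_univ _, hc123, hcardE⟩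

end FinLayer

section Outer

lemma card_ncpm (n e : ℕ) : (ncpm n e).card = n.choose (2*e) * catalan e := by
  classical
  have H : ∀ E ∈ ncpm n e, esupp E ∈ Finset.univ.powersetCard (2*e) := by
    intro E hE
    rw [ncpm, Finset.mem_filter] at hE
    rw [Finset.mem_powersetCard]
    refine ⟨Finset.subset_univ _, ?_⟩
    rw [card_esupp hE.2.1.1 hE.2.1.2.1, hE.2.2]
  rw [Finset.card_eq_sum_card_fiberwise H]
  rw [Finset.sum_congr rfl (fun S hS =>
    card_ncpm_fiber S (Finset.mem_powersetCard.1 hS).2)]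
  rw [Finset.sum_const, smul_eq_mul, Finset.card_powersetCard, Finset.card_univ,
    Fintype.card_fin]

open Classical in
noncomputable def configs (n e l : ℕ) : Finset (Finset (Fin n × Fin n) × Finset (Fin n)) :=
  Finset.univ.filter (fun p => IsNCC n p.1 p.2 ∧ p.1.card = e ∧ p.2.card = l)

lemma card_configs (n e l : ℕ) :
    (configs n e l).card = n.choose (2*e) * catalan e * (n - 2*e).choose l := by
  classical
  have H : ∀ p ∈ configs n e l, p.1 ∈ ncpm n e := by
    intro p hp
    rw [configs, Finset.mem_filter] at hp
    rw [ncpm, Finset.mem_filter]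
    exact ⟨Finset.mem_univ _, ⟨hp.2.1.1, hp.2.1.2.1, hp.2.1.2.2.1⟩, hp.2.2.1⟩
  rw [Finset.card_eq_sum_card_fiberwise H]
  have key : ∀ E ∈ ncpm n e,
      ((configs n e l).filter (fun p => p.1 = E)).card = (n - 2*e).choose l := by
    intro E hE
    rw [ncpm, Finset.mem_filter] at hE
    have hsc : (esupp E).card = 2*e := by
      rw [card_esupp hE.2.1.1 hE.2.1.2.1, hE.2.2]
    have hccard : ((esupp E)ᶜ : Finset (Fin n)).card = n - 2*e := by
      rw [Finset.card_compl, Fintype.card_fin, hsc]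
    rw [← hccard, ← Finset.card_powersetCard]
    apply Finset.card_nbij' (i := fun p => p.2) (j := fun L => (E, L))
    · intro p hp
      rw [Finset.mem_coe, Finset.mem_filter, configs, Finset.mem_filter] at hp
      obtain ⟨⟨-, hncc, hce, hcl⟩, hfst⟩ := hp
      rw [Finset.mem_coe, Finset.mem_powersetCard]
      refine ⟨?_, hcl⟩
      intro x hx
      rw [Finset.mem_compl, mem_esupp]
      rintro ⟨d, hd, hor⟩
      have := hncc.2.2.2 d (by rwa [hfst])
      rcases hor with rfl | rfl
      · exact this.1 hx
      · exact this.2 hx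
    · intro L hL
      rw [Finset.mem_coe, Finset.mem_powersetCard] at hL
      rw [Finset.mem_coe, Finset.mem_filter, configs, Finset.mem_filter]
      refine ⟨⟨Finset.mem_univ _, ⟨hE.2.1.1, hE.2.1.2.1, hE.2.1.2.2, ?_⟩, hE.2.2, hL.2⟩, rfl⟩
      intro d hd
      constructor <;> intro hmem
      · exact absurd (mem_esupp.2 ⟨d, hd, Or.inl rfl⟩) (Finset.mem_compl.1 (hL.1 hmem))
      · exact absurd (mem_esupp.2 ⟨d, hd, Or.inr rfl⟩) (Finset.mem_compl.1 (hL.1 hmem))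
    · intro p hp
      rw [Finset.mem_coe, Finset.mem_filter] at hp
      show (E, p.2) = p
      rw [← hp.2]
    · intro L hL
      rfl
  rw [Finset.sum_congr rfl key, Finset.sum_const, smul_eq_mul, card_ncpm]

end Outer


/-- key per-term identity -/
lemma term_eq_nat (n m e : ℕ) (hm : m ≤ n) (he : e ≤ m) :
    (m+1) * (n.choose (2*e) * ((2*e).choose e * (n - 2*e).choose (m-e))) =
    (e+1) * ((m+1).choose (e+1) * ((n-m).choose e * n.choose m)) := by
  rcases le_or_gt (2*e) n with h2 | h2
  · rcases le_or_gt e (n - m) with h3 | h3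
    · -- support case, via ℚ factorials
      have hQ : ((m:ℚ)+1) * (n.choose (2*e) * ((2*e).choose e * (n - 2*e).choose (m-e))) =
          ((e:ℚ)+1) * ((m+1).choose (e+1) * ((n-m).choose e * n.choose m)) := by
        rw [Nat.cast_choose ℚ h2, Nat.cast_choose ℚ (by omega : e ≤ 2*e),
          Nat.cast_choose ℚ (by omega : m - e ≤ n - 2*e),
          Nat.cast_choose ℚ (by omega : e + 1 ≤ m + 1),
          Nat.cast_choose ℚ (by omega : e ≤ n - m),
          Nat.cast_choose ℚ hm]
        rw [(by omega : 2*e - e = e), (by omega : n - 2*e - (m-e) = n - m - e),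
          (by omega : m + 1 - (e+1) = m - e)]
        rw [Nat.factorial_succ (m), Nat.factorial_succ (e)]
        push_cast
        have f1 : (Nat.factorial n : ℚ) ≠ 0 := by positivity
        have f2 : (Nat.factorial (2*e) : ℚ) ≠ 0 := by positivity
        have f3 : (Nat.factorial (n - 2*e) : ℚ) ≠ 0 := by positivity
        have f4 : (Nat.factorial e : ℚ) ≠ 0 := by positivity
        have f5 : (Nat.factorial (m-e) : ℚ) ≠ 0 := by positivity
        have f6 : (Nat.factorial (n-m-e) : ℚ) ≠ 0 := by positivity
        have f7 : (Nat.factorial m : ℚ) ≠ 0 := by positivity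
        have f8 : (Nat.factorial (n-m) : ℚ) ≠ 0 := by positivity
        field_simp
      exact_mod_cast hQ
    · rw [Nat.choose_eq_zero_of_lt (by omega : n - 2*e < m - e),
        Nat.choose_eq_zero_of_lt h3]
      ring
  · rw [Nat.choose_eq_zero_of_lt h2, Nat.choose_eq_zero_of_lt (by omega : n - m < e)]
    ring

lemma vand_sum (m N : ℕ) :
    ∑ e ∈ Finset.range (m+1), (m+1).choose (e+1) * N.choose e = (N + (m+1)).choose m := by
  rw [Nat.add_choose_eq, Finset.Nat.sum_antidiagonal_eq_sum_range_succ_mk]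
  refine Finset.sum_congr rfl fun e he => ?_
  have h1 : (m+1).choose (e+1) = (m+1).choose (m - e) := by
    rw [← Nat.choose_symm (by simp at he; omega : e + 1 ≤ m + 1)]
    congr 1; omega
  rw [h1, mul_comm]

lemma part2 (n k : ℕ) (hk : k ≤ n) :
    (∑ e ∈ Finset.range k,
        (n.choose (2 * e) : ℚ) * ((Nat.choose (2 * e) e : ℚ) / ((e : ℚ) + 1))
          * (n - 2 * e).choose (k - 1 - e)
      = 1 / ((n : ℚ) + 1) * (n + 1).choose k * chooseZ ((n : ℤ) + 1) ((k : ℤ) - 1)) := by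
  rcases Nat.eq_zero_or_pos k with rfl | hk0
  · simp [chooseZ]
  obtain ⟨m, rfl⟩ : ∃ m, k = m + 1 := ⟨k-1, by omega⟩
  have hm : m ≤ n := by omega
  have hcz : chooseZ ((n:ℤ)+1) ((((m+1):ℕ) : ℤ) - 1) = (n+1).choose m := by
    have h1 : ((((m+1):ℕ):ℤ) - 1) = (m:ℤ) := by push_cast; ring
    rw [h1, chooseZ, if_pos ⟨by positivity, by exact_mod_cast by omega⟩,
      show (n:ℤ)+1 = ((n+1:ℕ):ℤ) by push_cast; ring, Int.toNat_natCast, Int.toNat_natCast]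
  rw [hcz]
  have key : ∀ e ∈ Finset.range (m+1),
      (n.choose (2*e) : ℚ) * ((2*e).choose e / ((e:ℚ)+1)) * (n-2*e).choose ((m+1)-1-e)
        = (((m+1).choose (e+1) * (n-m).choose e : ℕ) : ℚ) * (n.choose m : ℚ) / ((m:ℚ)+1) := by
    intro e he
    simp only [Finset.mem_range] at he
    have h := term_eq_nat n m e hm (by omega)
    have hQ : ((m:ℚ)+1) * (n.choose (2*e) * ((2*e).choose e * (n-2*e).choose (m-e))) =
        ((e:ℚ)+1) * ((m+1).choose (e+1) * ((n-m).choose e * n.choose m)) := by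
      exact_mod_cast h
    have he1 : ((e:ℚ)+1) ≠ 0 := by positivity
    have hm1 : ((m:ℚ)+1) ≠ 0 := by positivity
    have hsub : (m+1)-1-e = m - e := by omega
    rw [hsub]
    push_cast
    field_simp
    linear_combination hQ
  rw [Finset.sum_congr rfl key]
  have hsum : ∑ e ∈ Finset.range (m+1),
      ((((m+1).choose (e+1) * (n-m).choose e : ℕ)) : ℚ) * (n.choose m : ℚ) / ((m:ℚ)+1)
      = ((∑ e ∈ Finset.range (m+1), (m+1).choose (e+1) * (n-m).choose e : ℕ) : ℚ)
          * (n.choose m : ℚ) / ((m:ℚ)+1) := by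
    rw [← Finset.sum_div, ← Finset.sum_mul, Nat.cast_sum]
  rw [hsum, vand_sum m (n-m), show n - m + (m+1) = n + 1 by omega]
  have habs : ((n:ℚ)+1) * (n.choose m) = ((n+1).choose (m+1)) * ((m:ℚ)+1) := by
    have := Nat.add_one_mul_choose_eq n m
    exact_mod_cast this
  have hn1 : ((n:ℚ)+1) ≠ 0 := by positivity
  have hm1 : ((m:ℚ)+1) ≠ 0 := by positivity
  field_simp
  linear_combination ((n+1).choose m : ℚ) * habs

/-- For `0 ≤ k ≤ n`: the number of non-crossing (1,2)-configurations on `n` vertices with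
`e` proper edges and `l` loops is `binom(n,2e)·Cat(e)·binom(n-2e,l)`, and summing this over
all pairs `(e,l)` with `e + l = k - 1` gives the Narayana number
`Nar(n+1,k) = (1/(n+1))·binom(n+1,k)·binom(n+1,k-1)`. -/
theorem ncc_count_and_narayana (n k : ℕ) (hk : k ≤ n) :
    (∀ e l : ℕ,
      (Nat.card {p : Finset (Fin n × Fin n) × Finset (Fin n) //
          IsNCC n p.1 p.2 ∧ p.1.card = e ∧ p.2.card = l} : ℚ)
        = n.choose (2 * e) * ((Nat.choose (2 * e) e : ℚ) / ((e : ℚ) + 1))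
            * (n - 2 * e).choose l) ∧
    (∑ e ∈ Finset.range k,
        (n.choose (2 * e) : ℚ) * ((Nat.choose (2 * e) e : ℚ) / ((e : ℚ) + 1))
          * (n - 2 * e).choose (k - 1 - e)
      = 1 / ((n : ℚ) + 1) * (n + 1).choose k * chooseZ ((n : ℤ) + 1) ((k : ℤ) - 1)) := by
  constructor
  · intro e l
    have h1 : Nat.card {p : Finset (Fin n × Fin n) × Finset (Fin n) //
        IsNCC n p.1 p.2 ∧ p.1.card = e ∧ p.2.card = l} = (configs n e l).card := by
      classical
      rw [Nat.card_eq_fintype_card, Fintype.card_subtype, configs]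
    rw [h1, card_configs]
    have h := succ_mul_catalan_eq_centralBinom e
    rw [Nat.centralBinom_eq_two_mul_choose] at h
    have hcat : ((e:ℚ)+1) * (catalan e : ℚ) = ((2*e).choose e : ℚ) := by exact_mod_cast h
    have he1 : ((e:ℚ)+1) ≠ 0 := by positivity
    push_cast
    field_simp
    linear_combination ((n.choose (2*e) : ℚ) * ((n-2*e).choose l : ℚ)) * hcat
  · exact part2 n k hk
end

section
/- For n ≥ 1 and 0 ≤ s ≤ n−1, at a primitive (2n)-th root of unity ξ and for any divisor d of 2n, the polynomial Y_{n,s}(q) := qbinom(2n,n) − q^{s+1}·qbinom(2n, n−s−1) evaluates as Y_{n,s}(ξ^d) = χ(2 | d)·binom(d, d/2) − (−1)^d·χ((2n/d) | (n−s−1))·binom(d, d(n−s−1)/(2n)), where χ(·) is 1 if the divisibility condition holds and 0 otherwise. -/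
open Polynomial

/-- The Gaussian (q-)binomial coefficient as a polynomial in `q = X` over `ℤ`,
defined via the q-Pascal recursion `[n+1, k+1] = [n, k] + q^(k+1) [n, k+1]`. -/
noncomputable def qbinomP : ℕ → ℕ → Polynomial ℤ
  | _, 0 => 1
  | 0, _ + 1 => 0
  | n + 1, k + 1 => qbinomP n k + X ^ (k + 1) * qbinomP n (k + 1)

lemma qbinomP_zero_right (n : ℕ) : qbinomP n 0 = 1 := by cases n <;> rfl
lemma qbinomP_succ_succ (n k : ℕ) :
    qbinomP (n+1) (k+1) = qbinomP n k + X ^ (k+1) * qbinomP n (k+1) := rfl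
lemma qbinomP_eq_zero_of_lt : ∀ {n k : ℕ}, n < k → qbinomP n k = 0
  | 0, _+1, _ => rfl
  | n+1, k+1, h => by
    rw [qbinomP_succ_succ, qbinomP_eq_zero_of_lt (show n < k by omega),
      qbinomP_eq_zero_of_lt (show n < k+1 by omega)]
    ring
lemma qbinomP_self : ∀ n, qbinomP n n = 1
  | 0 => rfl
  | n+1 => by
    rw [qbinomP_succ_succ, qbinomP_self n, qbinomP_eq_zero_of_lt (Nat.lt_succ_self n)]
    ring
lemma qbinomP_one_geom : ∀ n, qbinomP n 1 = ∑ i ∈ Finset.range n, (X:Polynomial ℤ) ^ i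
  | 0 => by simp [qbinomP]
  | n+1 => by
    rw [show (1:ℕ) = 0 + 1 from rfl, qbinomP_succ_succ, qbinomP_zero_right,
      qbinomP_one_geom n, geom_sum_succ]
    ring
lemma qbinomP_one_right (n : ℕ) : qbinomP (n+1) 1 = X ^ n + qbinomP n 1 := by
  rw [qbinomP_one_geom, qbinomP_one_geom, Finset.sum_range_succ]; ring

lemma qbinomP_sym_pascal : ∀ n k, k ≤ n →
    qbinomP (n+1) (k+1) = X ^ (n - k) * qbinomP n k + qbinomP n (k+1)
  | 0, k, h => by
    obtain rfl : k = 0 := Nat.le_zero.mp h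
    simp [qbinomP]
  | n+1, k, h => by
    rcases Nat.eq_or_lt_of_le h with rfl | hlt
    · rw [qbinomP_self, Nat.sub_self, pow_zero, one_mul, qbinomP_self,
        qbinomP_eq_zero_of_lt (Nat.lt_succ_self _), add_zero]
    · have hk : k ≤ n := by omega
      cases k with
      | zero =>
        rw [qbinomP_zero_right, Nat.sub_zero, mul_one, qbinomP_one_right]
      | succ j =>
        have hj : j ≤ n := by omega
        have hj1 : j + 1 ≤ n := by omega
        obtain ⟨a, rfl⟩ : ∃ a, n = j + 1 + a := ⟨n - (j+1), by omega⟩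
        have A := qbinomP_succ_succ (j+1+a+1) (j+1)
        have B := qbinomP_sym_pascal (j+1+a) j hj
        have C := qbinomP_sym_pascal (j+1+a) (j+1) hj1
        have D := qbinomP_succ_succ (j+1+a) j
        have E := qbinomP_succ_succ (j+1+a) (j+1)
        simp only [show j+1+a - j = a+1 from by omega, show j+1+a - (j+1) = a from by omega,
          show j+1+a+1 - (j+1) = a+1 from by omega] at A B C D E ⊢
        linear_combination A + B + X^(j+2) * C - X^(a+1) * D - E

lemma qbinomP_cross (n k : ℕ) (h : k ≤ n) :
    (1 - X ^ (n - k)) * qbinomP n k = (1 - (X:Polynomial ℤ) ^ (k+1)) * qbinomP n (k+1) := by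
  have h1 := qbinomP_succ_succ n k
  have h2 := qbinomP_sym_pascal n k h
  linear_combination h2 - h1

noncomputable def fEv (ζ : ℂ) (m k : ℕ) : ℂ :=
  (qbinomP m k).eval₂ (Int.castRingHom ℂ) ζ

lemma fEv_zero_right (ζ : ℂ) (m : ℕ) : fEv ζ m 0 = 1 := by
  simp [fEv, qbinomP_zero_right]

lemma fEv_eq_zero_of_lt (ζ : ℂ) {m k : ℕ} (h : m < k) : fEv ζ m k = 0 := by
  simp [fEv, qbinomP_eq_zero_of_lt h]

lemma fEv_self (ζ : ℂ) (m : ℕ) : fEv ζ m m = 1 := by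
  simp [fEv, qbinomP_self]

lemma fEv_succ_succ (ζ : ℂ) (m k : ℕ) :
    fEv ζ (m+1) (k+1) = fEv ζ m k + ζ^(k+1) * fEv ζ m (k+1) := by
  simp [fEv, qbinomP_succ_succ, eval₂_add, eval₂_mul, eval₂_X_pow]

lemma fEv_zero_left (ζ : ℂ) (k : ℕ) : fEv ζ 0 k = if k = 0 then 1 else 0 := by
  cases k with
  | zero => simp [fEv_zero_right]
  | succ j => simp [fEv_eq_zero_of_lt ζ (Nat.succ_pos j)]

lemma fEv_cross (ζ : ℂ) {n k : ℕ} (h : k ≤ n) :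
    (1 - ζ^(n-k)) * fEv ζ n k = (1 - ζ^(k+1)) * fEv ζ n (k+1) := by
  have := congrArg (eval₂ (Int.castRingHom ℂ) ζ) (qbinomP_cross n k h)
  simpa [fEv, eval₂_mul, eval₂_sub, eval₂_X_pow] using this

section Root
variable {D : ℕ} {ζ : ℂ} (hD : 0 < D) (hζ : IsPrimitiveRoot ζ D)
include hD hζ

omit hD in
lemma fEv_D_middle : ∀ i, 0 < i → i < D → fEv ζ D i = 0 := by
  intro i
  induction i with
  | zero => omega
  | succ j ih =>
    intro _ hjD
    have hcross := fEv_cross ζ (show j ≤ D by omega)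
    rcases Nat.eq_zero_or_pos j with rfl | hj
    · rw [fEv_zero_right, Nat.sub_zero, hζ.pow_eq_one, sub_self, zero_mul] at hcross
      have hne : (1 : ℂ) - ζ^(0+1) ≠ 0 := by
        have := hζ.pow_ne_one_of_pos_of_lt (by omega : 0+1 ≠ 0) (by omega)
        intro hc; apply this; linear_combination -hc
      exact (mul_eq_zero.mp hcross.symm).resolve_left hne
    · rw [ih hj (by omega), mul_zero] at hcross
      have hne : (1 : ℂ) - ζ^(j+1) ≠ 0 := by
        have := hζ.pow_ne_one_of_pos_of_lt (by omega : j+1 ≠ 0) (by omega)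
        intro hc; apply this; linear_combination -hc
      exact (mul_eq_zero.mp hcross.symm).resolve_left hne

lemma fEv_D (k : ℕ) :
    fEv ζ D k = (if k = 0 then 1 else 0) + (if k = D then 1 else 0) := by
  by_cases h0 : k = 0
  · subst h0
    rw [fEv_zero_right, if_pos rfl, if_neg (by omega)]; ring
  by_cases hDk : k = D
  · subst hDk
    rw [fEv_self, if_neg h0, if_pos rfl]; ring
  rw [if_neg h0, if_neg hDk, add_zero]
  rcases lt_or_gt_of_ne hDk with h | h
  · exact fEv_D_middle hζ k (by omega) h
  · exact fEv_eq_zero_of_lt ζ h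

lemma fEv_add_D : ∀ m k, fEv ζ (m + D) k
    = fEv ζ m k + (if D ≤ k then fEv ζ m (k - D) else 0) := by
  intro m
  induction m with
  | zero =>
    intro k
    rw [Nat.zero_add, fEv_D hD hζ, fEv_zero_left]
    by_cases h : D ≤ k
    · rw [if_pos h, fEv_zero_left]
      split_ifs <;> (try omega) <;> ring
    · rw [if_neg h]
      split_ifs <;> (try omega) <;> ring
  | succ m ih =>
    intro k
    cases k with
    | zero =>
      simp [show m + 1 + D = (m + D) + 1 from by omega, fEv_zero_right, Nat.not_le.mpr hD]
    | succ k =>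
      rw [show m + 1 + D = (m + D) + 1 from by omega, fEv_succ_succ, ih k, ih (k+1),
        fEv_succ_succ]
      by_cases h1 : D ≤ k
      · rw [if_pos h1, if_pos (by omega : D ≤ k + 1), if_pos (by omega : D ≤ k + 1),
          show k + 1 - D = (k - D) + 1 from by omega, fEv_succ_succ]
        have hz : ζ^(k+1) = ζ^(k-D+1) := by
          rw [show k + 1 = (k - D + 1) + D from by omega, pow_add, hζ.pow_eq_one, mul_one]
        rw [hz]; ring
      · by_cases h2 : D = k + 1
        · rw [if_neg h1, if_pos (by omega : D ≤ k + 1), if_pos (by omega : D ≤ k + 1),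
            show k + 1 - D = 0 from by omega, fEv_zero_right, fEv_zero_right,
            show k + 1 = D from by omega, hζ.pow_eq_one]
          ring
        · rw [if_neg h1, if_neg (by omega : ¬ D ≤ k + 1), if_neg (by omega : ¬ D ≤ k + 1)]
          ring

lemma fEv_lucas : ∀ a k, fEv ζ (a * D) k
    = if D ∣ k then ((a.choose (k / D)) : ℂ) else 0 := by
  intro a
  induction a with
  | zero =>
    intro k
    rw [Nat.zero_mul, fEv_zero_left]
    by_cases h : D ∣ k
    · rw [if_pos h]
      rcases Nat.eq_zero_or_pos k with rfl | hk
      · simp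
      · rw [if_neg (by omega),
          Nat.choose_eq_zero_of_lt (Nat.div_pos (Nat.le_of_dvd hk h) hD)]
        simp
    · rw [if_neg h, if_neg (by rintro rfl; exact h (dvd_zero D))]
  | succ a ih =>
    intro k
    rw [show (a + 1) * D = a * D + D from by ring, fEv_add_D hD hζ]
    by_cases hdvd : D ∣ k
    · obtain ⟨j, rfl⟩ := hdvd
      cases j with
      | zero => simp [ih, Nat.not_le.mpr hD]
      | succ i =>
        have h1 : D ≤ D * (i+1) := Nat.le_mul_of_pos_right D (Nat.succ_pos i)
        have h2 : D * (i+1) - D = D * i := by rw [Nat.mul_succ, Nat.add_sub_cancel]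
        rw [ih (D*(i+1)), if_pos h1, h2, ih (D*i),
          if_pos ⟨i+1, rfl⟩, if_pos ⟨i, rfl⟩, if_pos ⟨i+1, rfl⟩,
          Nat.mul_div_cancel_left _ hD, Nat.mul_div_cancel_left _ hD,
          Nat.choose_succ_succ]
        push_cast; ring
    · rw [ih k, if_neg hdvd, if_neg hdvd, zero_add]
      by_cases h1 : D ≤ k
      · rw [if_pos h1, ih (k - D), if_neg ?_]
        intro h2
        apply hdvd
        have := Nat.dvd_add h2 (dvd_refl D)
        rwa [Nat.sub_add_cancel h1] at this
      · rw [if_neg h1]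
end Root

/-- For `n ≥ 1` and `0 ≤ s ≤ n-1`, at a primitive `(2n)`-th root of unity `ξ` and for any
divisor `d` of `2n`, the polynomial `Y_{n,s}(q) = qbinom(2n,n) - q^(s+1)·qbinom(2n, n-s-1)`
evaluates as
`Y_{n,s}(ξ^d) = χ(2 ∣ d)·binom(d, d/2) - (-1)^d·χ((2n/d) ∣ (n-s-1))·binom(d, d(n-s-1)/(2n))`. -/
theorem Y_eval_at_root_of_unity (n s d : ℕ) (hn : 1 ≤ n) (hs : s ≤ n - 1) (ξ : ℂ)
    (hξ : IsPrimitiveRoot ξ (2 * n)) (hd : d ∣ 2 * n) :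
    Polynomial.eval₂ (Int.castRingHom ℂ) (ξ ^ d)
        (qbinomP (2 * n) n - X ^ (s + 1) * qbinomP (2 * n) (n - s - 1))
    = (if 2 ∣ d then (Nat.choose d (d / 2) : ℂ) else 0)
        - (-1 : ℂ) ^ d *
          (if (2 * n / d) ∣ (n - s - 1) then
            (Nat.choose d (d * (n - s - 1) / (2 * n)) : ℂ) else 0) := by
  have h2n : 0 < 2 * n := by omega
  have hdpos : 0 < d := Nat.pos_of_dvd_of_pos hd h2n
  set D := 2 * n / d with hDdef
  set e := n - s - 1 with hedef
  have hdD : d * D = 2 * n := Nat.mul_div_cancel' hd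
  have hD : 0 < D := Nat.div_pos (Nat.le_of_dvd h2n hd) hdpos
  have hζ : IsPrimitiveRoot (ξ ^ d) D := hξ.pow h2n (by rw [← hdD])
  have hse : s + 1 + e = n := by omega
  have heval : Polynomial.eval₂ (Int.castRingHom ℂ) (ξ ^ d)
      (qbinomP (2*n) n - X ^ (s+1) * qbinomP (2*n) e)
      = fEv (ξ^d) (2*n) n - (ξ^d)^(s+1) * fEv (ξ^d) (2*n) e := by
    simp [fEv, eval₂_sub, eval₂_mul, eval₂_X_pow]
  rw [heval]
  have hL1 : fEv (ξ^d) (2*n) n = if 2 ∣ d then ((d.choose (d/2)) : ℂ) else 0 := by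
    rw [show 2*n = d * D from hdD.symm, fEv_lucas hD hζ]
    by_cases he2 : 2 ∣ d
    · obtain ⟨m, hm⟩ := he2
      have hn' : n = D * m := by
        have : 2 * (D * m) = 2 * n := by rw [← hdD, hm]; ring
        omega
      have hq : n / D = m := by rw [hn', Nat.mul_div_cancel_left m hD]
      rw [if_pos ⟨m, hn'⟩, if_pos ⟨m, hm⟩, hq, show d / 2 = m from by omega]
    · rw [if_neg he2, if_neg ?_]
      rintro ⟨m, hm⟩
      exact he2 ⟨m, Nat.eq_of_mul_eq_mul_right hD (by rw [hdD, hm]; ring)⟩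
  have hxin : ξ ^ n = -1 := by
    have hsq : (ξ ^ n - 1) * (ξ ^ n + 1) = 0 := by
      have h1 : ξ ^ (2 * n) = 1 := hξ.pow_eq_one
      have : (ξ ^ n) ^ 2 = 1 := by rw [← pow_mul, Nat.mul_comm]; exact h1
      linear_combination this
    rcases mul_eq_zero.mp hsq with h | h
    · exact absurd (by linear_combination h) (hξ.pow_ne_one_of_pos_of_lt (by omega) (by omega))
    · linear_combination h
  have hL2 : (ξ^d)^(s+1) * fEv (ξ^d) (2*n) e
      = (-1 : ℂ) ^ d * (if D ∣ e then ((d.choose (d * e / (2*n))) : ℂ) else 0) := by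
    rw [show 2*n = d * D from hdD.symm, fEv_lucas hD hζ]
    by_cases hdvd : D ∣ e
    · obtain ⟨m, hm⟩ := hdvd
      have key : d * (s+1) + (d * D) * m = d * n := by rw [← hse, hm]; ring
      have hpow : (ξ^d)^(s+1) = (-1 : ℂ)^d := by
        rw [← pow_mul]
        calc ξ ^ (d * (s+1)) = ξ ^ (d * (s+1)) * (ξ ^ (d * D)) ^ m := by
              rw [hdD, hξ.pow_eq_one, one_pow, mul_one]
          _ = ξ ^ (d * (s+1) + (d * D) * m) := by rw [pow_add, ← pow_mul]
          _ = (ξ ^ n) ^ d := by rw [key, Nat.mul_comm, pow_mul]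
          _ = (-1 : ℂ)^d := by rw [hxin]
      have hq1 : e / D = m := by rw [hm, Nat.mul_div_cancel_left m hD]
      have hq2 : d * e / (d * D) = m := by
        rw [hm, show d * (D * m) = (d * D) * m from by ring,
          Nat.mul_div_cancel_left m (by positivity)]
      rw [if_pos ⟨m, hm⟩, if_pos ⟨m, hm⟩, hq1, hq2, hpow]
    · rw [if_neg hdvd, if_neg hdvd, mul_zero, mul_zero]
  rw [hL1, hL2]
end
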